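/- Let 0 < H < 1/2, T > 0 and γ > 1/2 − H. If φ : [0,T] → ℝ satisfies |φ(t) − φ(s)| ≤ M |t−s|^γ for all s,t ∈ [0,T] and some constant M, then ‖φ‖_K² < ∞, i.e. both integrals ∫_0^T φ(s)²[(T−s)^{2H−1}+s^{2H−1}] ds and ∫_0^T ( ∫_s^T |φ(t)−φ(s)|(t−s)^{H−3/2} dt )² ds are finite. (In particular every γ-Hölder continuous function on [0,T] belongs to the Hilbert space associated with fractional Brownian motion of Hurst parameter H.) -/

import Mathlib

/-! A γ-Hölder function with `γ > 0` is bounded on `[0,T]`, so the first integrand is dominated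
by `C² ((T-s)^{2H-1} + s^{2H-1})` with `C = sup |φ|`, integrable since `2H - 1 > -1`. In the
second, the Hölder bound dominates the inner integral by `∫_0^T M u^{γ+H-3/2} du`, finite since
`γ + H - 3/2 > -1` and independent of `s`, so the outer integrand is bounded. -/

open MeasureTheory Real

/-- The square `‖φ‖_K²` of the seminorm `‖·‖_K`, as a Lebesgue integral with values in `[0,∞]`:
`∫_0^T φ(s)²[(T-s)^{2H-1}+s^{2H-1}] ds
  + ∫_0^T ( ∫_s^T |φ(t)-φ(s)| (t-s)^{H-3/2} dt )² ds`. -/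
noncomputable def normKsq (H T : ℝ) (φ : ℝ → ℝ) : ENNReal :=
  (∫⁻ s in Set.Ioo 0 T, ENNReal.ofReal (φ s ^ 2 * ((T - s) ^ (2 * H - 1) + s ^ (2 * H - 1)))) +
  ∫⁻ s in Set.Ioo 0 T,
    (∫⁻ t in Set.Ioo s T, ENNReal.ofReal (|φ t - φ s| * (t - s) ^ (H - 3 / 2))) ^ 2

open Set
open scoped ENNReal

lemma setLIntegral_Ioo_comp_sub_right (f : ℝ → ℝ≥0∞) (a b c : ℝ) :
    ∫⁻ t in Ioo a b, f (t - c) = ∫⁻ u in Ioo (a - c) (b - c), f u := by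
  simpa [preimage_sub_const_Ioo] using (measurePreserving_sub_right volume c)
    |>.setLIntegral_comp_preimage_emb (measurableEmbedding_subRight c) f (Ioo (a - c) (b - c))

lemma setLIntegral_Ioo_comp_const_sub (f : ℝ → ℝ≥0∞) (a b c : ℝ) :
    ∫⁻ t in Ioo a b, f (c - t) = ∫⁻ u in Ioo (c - b) (c - a), f u := by
  simpa [preimage_const_sub_Ioo] using (Measure.measurePreserving_sub_left volume c)
    |>.setLIntegral_comp_preimage_emb (Homeomorph.subLeft c).measurableEmbedding f
      (Ioo (c - b) (c - a))

lemma setLIntegral_Ioo_ofReal_mul_rpow_lt_top (c : ℝ) {b p : ℝ} (hb : 0 < b) (hp : -1 < p) :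
    ∫⁻ u in Ioo 0 b, ENNReal.ofReal (c * u ^ p) < ∞ :=
  IntegrableOn.setLIntegral_lt_top
    (((intervalIntegral.integrableOn_Ioo_rpow_iff hb).2 hp).const_mul c)

lemma setLIntegral_sq_mul_rpow_endpoints_lt_top {T r C : ℝ} {φ : ℝ → ℝ} (hT : 0 < T)
    (hr : -1 < r) (hφ : ∀ s ∈ Ioo 0 T, |φ s| ≤ C) :
    ∫⁻ s in Ioo 0 T, ENNReal.ofReal (φ s ^ 2 * ((T - s) ^ r + s ^ r)) < ∞ := by
  have hle : ∀ s ∈ Ioo 0 T, ENNReal.ofReal (φ s ^ 2 * ((T - s) ^ r + s ^ r))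
      ≤ ENNReal.ofReal (C ^ 2 * (T - s) ^ r) + ENNReal.ofReal (C ^ 2 * s ^ r) := by
    intro s hs
    have hsq : φ s ^ 2 ≤ C ^ 2 := sq_le_sq' (abs_le.1 (hφ s hs)).1 (abs_le.1 (hφ s hs)).2
    have hweight : 0 ≤ (T - s) ^ r + s ^ r :=
      add_nonneg (rpow_nonneg (sub_nonneg.2 hs.2.le) r) (rpow_nonneg hs.1.le r)
    refine (ENNReal.ofReal_le_ofReal ?_).trans ENNReal.ofReal_add_le
    exact (mul_le_mul_of_nonneg_right hsq hweight).trans_eq (by ring)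
  calc _ ≤ ∫⁻ s in Ioo 0 T,
          ENNReal.ofReal (C ^ 2 * (T - s) ^ r) + ENNReal.ofReal (C ^ 2 * s ^ r) :=
        setLIntegral_mono' measurableSet_Ioo hle
    _ = (∫⁻ s in Ioo 0 T, ENNReal.ofReal (C ^ 2 * (T - s) ^ r))
          + ∫⁻ s in Ioo 0 T, ENNReal.ofReal (C ^ 2 * s ^ r) := lintegral_add_left (by fun_prop) _
    _ < ∞ := by
      rw [setLIntegral_Ioo_comp_const_sub (fun u => ENNReal.ofReal (C ^ 2 * u ^ r)), sub_self,
        sub_zero]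
      exact ENNReal.add_lt_top.2 ⟨setLIntegral_Ioo_ofReal_mul_rpow_lt_top _ hT hr,
        setLIntegral_Ioo_ofReal_mul_rpow_lt_top _ hT hr⟩

section HolderOnIcc

variable {T γ M : ℝ} {φ : ℝ → ℝ}
  (hφ : ∀ s ∈ Icc 0 T, ∀ t ∈ Icc 0 T, |φ t - φ s| ≤ M * |t - s| ^ γ)
include hφ

lemma abs_le_of_holderOn_Icc (hγ : 0 ≤ γ) {s : ℝ} (hs : s ∈ Icc 0 T) :
    |φ s| ≤ |φ 0| + |M| * T ^ γ := by
  have h0 : (0 : ℝ) ∈ Icc 0 T := ⟨le_rfl, hs.1.trans hs.2⟩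
  calc |φ s| ≤ |φ 0| + |φ s - φ 0| := by linarith [abs_sub_abs_le_abs_sub (φ s) (φ 0)]
    _ ≤ |φ 0| + |M| * T ^ γ := by
      gcongr
      calc |φ s - φ 0| ≤ M * |s - 0| ^ γ := hφ 0 h0 s hs
        _ ≤ |M| * |s - 0| ^ γ := by gcongr; exact le_abs_self M
        _ ≤ |M| * T ^ γ := by
          rw [sub_zero, abs_of_nonneg hs.1]
          gcongr
          exacts [hs.1, hs.2]

lemma setLIntegral_Ioo_holder_mul_rpow_le (q : ℝ) {s : ℝ} (hs : s ∈ Icc 0 T) :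
    ∫⁻ t in Ioo s T, ENNReal.ofReal (|φ t - φ s| * (t - s) ^ q)
      ≤ ∫⁻ u in Ioo 0 T, ENNReal.ofReal (M * u ^ (γ + q)) := by
  have hle : ∀ t ∈ Ioo s T, ENNReal.ofReal (|φ t - φ s| * (t - s) ^ q)
      ≤ ENNReal.ofReal (M * (t - s) ^ (γ + q)) := by
    intro t ht
    have hts : 0 < t - s := sub_pos.2 ht.1
    have hholder := hφ s hs t ⟨hs.1.trans ht.1.le, ht.2.le⟩
    rw [abs_of_pos hts] at hholder
    refine ENNReal.ofReal_le_ofReal ?_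
    calc |φ t - φ s| * (t - s) ^ q ≤ M * (t - s) ^ γ * (t - s) ^ q := by gcongr
      _ = M * (t - s) ^ (γ + q) := by rw [mul_assoc, ← rpow_add hts]
  calc _ ≤ ∫⁻ t in Ioo s T, ENNReal.ofReal (M * (t - s) ^ (γ + q)) :=
        setLIntegral_mono' measurableSet_Ioo hle
    _ = ∫⁻ u in Ioo (s - s) (T - s), ENNReal.ofReal (M * u ^ (γ + q)) :=
        setLIntegral_Ioo_comp_sub_right (fun u => ENNReal.ofReal (M * u ^ (γ + q))) s T s
    _ ≤ _ := by
      rw [sub_self]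
      exact lintegral_mono_set (Ioo_subset_Ioo_right (by linarith [hs.1]))

end HolderOnIcc

/-- if `0 < H < 1/2`, `T > 0`, `γ > 1/2 - H` and `φ : [0,T] → ℝ` is `γ`-Hölder
continuous, i.e. `|φ(t) - φ(s)| ≤ M |t-s|^γ` on `[0,T]`, then `‖φ‖_K² < ∞`; in particular every
`γ`-Hölder continuous function on `[0,T]` belongs to the Hilbert space `𝓗` associated with
fractional Brownian motion with Hurst parameter `H`. -/
theorem holder_mem_HK (H T γ M : ℝ) (hH0 : 0 < H) (hH : H < 1 / 2) (hT : 0 < T)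
    (hγ : 1 / 2 - H < γ) (φ : ℝ → ℝ)
    (hφ : ∀ s ∈ Set.Icc (0:ℝ) T, ∀ t ∈ Set.Icc (0:ℝ) T, |φ t - φ s| ≤ M * |t - s| ^ γ) :
    normKsq H T φ < ⊤ := by
  have hbdd : ∀ s ∈ Ioo 0 T, |φ s| ≤ |φ 0| + |M| * T ^ γ := fun s hs =>
    abs_le_of_holderOn_Icc hφ (by linarith) (Ioo_subset_Icc_self hs)
  set K := ∫⁻ u in Ioo 0 T, ENNReal.ofReal (M * u ^ (γ + (H - 3 / 2)))
  have hK : K < ∞ := setLIntegral_Ioo_ofReal_mul_rpow_lt_top M hT (by linarith)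
  refine ENNReal.add_lt_top.2
    ⟨setLIntegral_sq_mul_rpow_endpoints_lt_top hT (by linarith) hbdd, ?_⟩
  calc _ ≤ ∫⁻ _ in Ioo 0 T, K ^ 2 := setLIntegral_mono' measurableSet_Ioo fun s hs =>
        pow_le_pow_left₀ zero_le
          (setLIntegral_Ioo_holder_mul_rpow_le hφ _ (Ioo_subset_Icc_self hs)) 2
    _ = K ^ 2 * volume (Ioo 0 T) := setLIntegral_const _ _
    _ < ∞ := ENNReal.mul_lt_top (ENNReal.pow_lt_top hK) measure_Ioo_lt_top
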